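/- arXiv:2007.07668 — 5 statements merged into one kernel-verified Lean document; each statement's English description precedes it below -/
import Mathlib

section
/- Let D satisfy D(0)=0, be four times differentiable at 0 with D''(0) < 0. Then lim_{ρ→0⁺} [ D(ρ²)/ρ⁴ − D'(ρ²)²/(D'(0)ρ²) ] = −(3/2) D''(0). -/
/-!
Write `x = ρ²`, `a = D'(0)`, `b = D''(0)`. The second-order Taylor expansion with Peano remainder
gives `D(x) / x² = a / x + b / 2 + o(1)`, and
`a / x - D'(x)² / (a x) = ((a - D'(x)) / x) · ((a + D'(x)) / a) → (-b) · 2`.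
Adding up, the limit is `b / 2 - 2 b = -(3/2) b`.
-/

open Filter Topology Asymptotics

theorem ContDiffAt.hasDerivAt_deriv {𝕜 F : Type*} [NontriviallyNormedField 𝕜]
    [NormedAddCommGroup F] [NormedSpace 𝕜 F] {f : 𝕜 → F} {x : 𝕜} (hf : ContDiffAt 𝕜 2 f x) :
    HasDerivAt (deriv f) (iteratedDeriv 2 f x) x := by
  rw [iteratedDeriv_succ, iteratedDeriv_one]
  exact ((hf.derivWithin (m := 1) le_rfl).differentiableAt one_ne_zero).hasDerivAt

theorem isLittleO_sub_taylor_two {f : ℝ → ℝ} {x₀ b : ℝ}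
    (hf : ∀ᶠ x in 𝓝 x₀, DifferentiableAt ℝ f x) (hf' : HasDerivAt (deriv f) b x₀) :
    (fun x ↦ f x - f x₀ - deriv f x₀ * (x - x₀) - b / 2 * (x - x₀) ^ 2)
      =o[𝓝 x₀] fun x ↦ (x - x₀) ^ 2 := by
  obtain ⟨ε, hε, hball⟩ := Metric.eventually_nhds_iff_ball.mp hf
  have hnhds : 𝓝[Metric.ball x₀ ε] x₀ = 𝓝 x₀ := nhdsWithin_eq_nhds.mpr (Metric.ball_mem_nhds x₀ hε)
  have hR' : ∀ x ∈ Metric.ball x₀ ε, HasDerivWithinAt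
      (fun x ↦ f x - deriv f x₀ * (x - x₀) - b / 2 * (x - x₀) ^ 2)
      (deriv f x - deriv f x₀ - (x - x₀) * b) (Metric.ball x₀ ε) x := by
    intro x hx
    have hderiv := (((hball x hx).hasDerivAt.sub (((hasDerivAt_id x).sub_const x₀).const_mul
      (deriv f x₀))).sub ((((hasDerivAt_id x).sub_const x₀).pow 2).const_mul (b / 2)))
    exact (hderiv.congr_deriv (by simp; ring)).hasDerivWithinAt
  have h := Convex.isLittleO_pow_succ_real (convex_ball x₀ ε) (Metric.mem_ball_self hε) hR'
    (n := 1) (by simpa [hnhds, smul_eq_mul] using hf'.isLittleO)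
  rw [hnhds] at h
  exact h.congr_left fun x ↦ by simp only [sub_self, mul_zero, zero_pow two_ne_zero]; ring

theorem tendsto_div_sq_sub_deriv_sq_div {f : ℝ → ℝ} {b : ℝ} (hf0 : f 0 = 0)
    (ha : deriv f 0 ≠ 0) (hf : ∀ᶠ x in 𝓝 0, DifferentiableAt ℝ f x)
    (hf' : HasDerivAt (deriv f) b 0) :
    Tendsto (fun x ↦ f x / x ^ 2 - deriv f x ^ 2 / (deriv f 0 * x)) (𝓝[≠] 0)
      (𝓝 (-(3 / 2) * b)) := by
  set a := deriv f 0
  have hremainder : Tendsto (fun x ↦ (f x - a * x - b / 2 * x ^ 2) / x ^ 2) (𝓝[≠] 0) (𝓝 0) := by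
    simpa [hf0] using
      (isLittleO_sub_taylor_two hf hf').tendsto_div_nhds_zero.mono_left nhdsWithin_le_nhds
  have hslope : Tendsto (fun x ↦ (a - deriv f x) / x) (𝓝[≠] 0) (𝓝 (-b)) := by
    refine hf'.tendsto_slope_zero.neg.congr fun x ↦ ?_
    simp only [zero_add, smul_eq_mul]
    ring
  have hmean : Tendsto (fun x ↦ (a + deriv f x) / a) (𝓝[≠] 0) (𝓝 2) := by
    have hcont : ContinuousAt (fun x ↦ (a + deriv f x) / a) 0 :=
      (continuousAt_const.add hf'.continuousAt).div_const a
    have hlim := hcont.tendsto.mono_left (nhdsWithin_le_nhds (s := {0}ᶜ))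
    rwa [← two_mul, mul_div_cancel_right₀ _ ha] at hlim
  have hsum := (hremainder.add_const (b / 2)).add (hslope.mul hmean)
  rw [show 0 + b / 2 + -b * 2 = -(3 / 2) * b by ring] at hsum
  refine hsum.congr' ?_
  filter_upwards [self_mem_nhdsWithin] with x (hx : x ≠ 0)
  field_simp
  ring

theorem tendsto_sq_nhdsGT_nhdsNE : Tendsto (fun ρ : ℝ ↦ ρ ^ 2) (𝓝[>] 0) (𝓝[≠] 0) :=
  tendsto_nhdsWithin_iff.mpr
    ⟨((continuous_pow 2).tendsto' (0 : ℝ) 0 (zero_pow two_ne_zero)).mono_left nhdsWithin_le_nhds,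
      eventually_nhdsWithin_of_forall fun ρ (hρ : 0 < ρ) ↦ (pow_pos hρ 2).ne'⟩

theorem stmt5_general (D : ℝ → ℝ) (hD0 : D 0 = 0)
    (hsmooth : ContDiffAt ℝ 4 D 0)
    (hD'0 : 0 < deriv D 0) :
    Filter.Tendsto
      (fun ρ : ℝ => D (ρ ^ 2) / ρ ^ 4 - (deriv D (ρ ^ 2)) ^ 2 / (deriv D 0 * ρ ^ 2))
      (nhdsWithin 0 (Set.Ioi 0))
      (nhds (-(3 / 2) * iteratedDeriv 2 D 0)) := by
  have hdiff : ∀ᶠ x in 𝓝 0, DifferentiableAt ℝ D x :=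
    (hsmooth.eventually (by simp)).mono fun x hx ↦ hx.differentiableAt (by simp)
  have hlim := tendsto_div_sq_sub_deriv_sq_div hD0 hD'0.ne' hdiff
    (hsmooth.of_le (by norm_num)).hasDerivAt_deriv
  refine (hlim.comp tendsto_sq_nhdsGT_nhdsNE).congr fun ρ ↦ ?_
  simp only [Function.comp_apply, ← pow_mul]

/-- If `D(0)=0`, `D` is C⁴ near `0`, `D'(0) > 0` and `D''(0) < 0`, then
`lim_{ρ→0⁺} [ D(ρ²)/ρ⁴ − D'(ρ²)²/(D'(0)ρ²) ] = −(3/2) D''(0)`. -/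
theorem stmt5 (D : ℝ → ℝ) (hD0 : D 0 = 0)
    (hsmooth : ContDiffAt ℝ 4 D 0)
    (hD'0 : 0 < deriv D 0)
    (hD''0 : iteratedDeriv 2 D 0 < 0) :
    Filter.Tendsto
      (fun ρ : ℝ => D (ρ ^ 2) / ρ ^ 4 - (deriv D (ρ ^ 2)) ^ 2 / (deriv D 0 * ρ ^ 2))
      (nhdsWithin 0 (Set.Ioi 0))
      (nhds (-(3 / 2) * iteratedDeriv 2 D 0)) :=
  stmt5_general D hD0 hsmooth hD'0
end

section
/- Define β(ρ²) = (D'(ρ²) − D'(0)) / √(D(ρ²) − D'(ρ²)²ρ²/D'(0)). Under the hypotheses D(0)=0, D C⁴ near 0, D''(0)<0, one has lim_{ρ→0⁺} β(ρ²)² = −(2/3) D''(0). -/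
/-!
Write `a = D'(0)` and `b = D''(0)`. To first order `D'(y) - a ~ b y`, and by L'Hôpital
`D(y) - a y ~ b y² / 2`. Since `D(y) - D'(y)² y / a = (D(y) - a y) - (D'(y) - a)(D'(y) + a) y / a`
and `D'(y) + a → 2a`, the radicand behaves like `(b/2 - 2b) y² = -(3/2) b y²`, which is positive
because `b < 0`. Hence `β(y)² ~ b² y² / (-(3/2) b y²) = -(2/3) b`, and `ρ ↦ ρ²` maps `0⁺` to `0⁺`.
-/

open Real Filter Topology

lemma HasDerivAt.tendsto_sub_div_nhdsGT_zero {g : ℝ → ℝ} {b : ℝ} (h : HasDerivAt g b 0) :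
    Tendsto (fun y => (g y - g 0) / y) (𝓝[>] 0) (𝓝 b) := by
  simpa [div_eq_inv_mul] using h.tendsto_slope_zero_right

lemma tendsto_sub_sub_deriv_mul_div_sq_nhdsGT_zero {f : ℝ → ℝ} {b : ℝ}
    (hf : ∀ᶠ y in 𝓝 0, DifferentiableAt ℝ f y) (hf' : HasDerivAt (deriv f) b 0) :
    Tendsto (fun y => (f y - f 0 - deriv f 0 * y) / y ^ 2) (𝓝[>] 0) (𝓝 (b / 2)) := by
  have hcont : ContinuousAt (fun y => f y - f 0 - deriv f 0 * y) 0 := by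
    have := hf.self_of_nhds.continuousAt
    fun_prop
  refine HasDerivAt.lhopital_zero_nhdsGT (f' := fun y => deriv f y - deriv f 0)
    (g' := fun y => 2 * y) ?_ ?_ ?_ ?_ ?_ ?_
  · filter_upwards [nhdsWithin_le_nhds hf] with y hy
    simpa using (hy.hasDerivAt.sub_const (f 0)).fun_sub ((hasDerivAt_id y).const_mul (deriv f 0))
  · exact Eventually.of_forall fun y => by simpa using hasDerivAt_pow 2 y
  · filter_upwards [self_mem_nhdsWithin] with y hy using mul_ne_zero two_ne_zero hy.ne'
  · simpa using hcont.tendsto.mono_left nhdsWithin_le_nhds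
  · simpa using ((continuous_pow 2).tendsto (0 : ℝ)).mono_left nhdsWithin_le_nhds
  · refine (hf'.tendsto_sub_div_nhdsGT_zero.div_const 2).congr fun y => ?_
    rw [div_div, mul_comm]

section StructureFunction

variable {D : ℝ → ℝ} {b : ℝ}

lemma tendsto_sub_sq_deriv_mul_div_div_sq_nhdsGT_zero (hD0 : D 0 = 0) (ha : deriv D 0 ≠ 0)
    (hD : ∀ᶠ y in 𝓝 0, DifferentiableAt ℝ D y) (hD' : HasDerivAt (deriv D) b 0) :
    Tendsto (fun y => (D y - deriv D y ^ 2 * y / deriv D 0) / y ^ 2) (𝓝[>] 0)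
      (𝓝 (-(3 / 2) * b)) := by
  have hslope := hD'.tendsto_sub_div_nhdsGT_zero
  have htaylor := tendsto_sub_sub_deriv_mul_div_sq_nhdsGT_zero hD hD'
  have hsum : Tendsto (fun y => (deriv D y + deriv D 0) / deriv D 0) (𝓝[>] 0) (𝓝 2) := by
    have := (hD'.continuousAt.tendsto.add_const (deriv D 0)).div_const (deriv D 0)
    rw [← two_mul, mul_div_cancel_right₀ _ ha] at this
    exact this.mono_left nhdsWithin_le_nhds
  rw [show -(3 / 2) * b = b / 2 - b * 2 by ring]
  refine (htaylor.sub (hslope.mul hsum)).congr' ?_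
  filter_upwards [self_mem_nhdsWithin] with y (hy : 0 < y)
  rw [hD0]
  field_simp
  ring

lemma tendsto_beta_sq_nhdsGT_zero (hD0 : D 0 = 0) (ha : deriv D 0 ≠ 0) (hb : b < 0)
    (hD : ∀ᶠ y in 𝓝 0, DifferentiableAt ℝ D y) (hD' : HasDerivAt (deriv D) b 0) :
    Tendsto (fun y => ((deriv D y - deriv D 0) /
        √(D y - deriv D y ^ 2 * y / deriv D 0)) ^ 2) (𝓝[>] 0) (𝓝 (-(2 / 3) * b)) := by
  have hrad := tendsto_sub_sq_deriv_mul_div_div_sq_nhdsGT_zero hD0 ha hD hD'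
  have hrad_pos : ∀ᶠ y in 𝓝[>] 0, 0 < D y - deriv D y ^ 2 * y / deriv D 0 := by
    filter_upwards [hrad.eventually (eventually_gt_nhds (by linarith : (0 : ℝ) < -(3 / 2) * b)), self_mem_nhdsWithin]
      with y hy (hy0 : 0 < y)
    exact (div_pos_iff_of_pos_right (by positivity)).1 hy
  rw [show -(2 / 3) * b = b ^ 2 / (-(3 / 2) * b) by field_simp]
  refine ((hD'.tendsto_sub_div_nhdsGT_zero.pow 2).div hrad (by nlinarith)).congr' ?_
  filter_upwards [hrad_pos, self_mem_nhdsWithin] with y hy (hy0 : 0 < y)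
  rw [Pi.div_apply, div_pow, div_pow, sq_sqrt hy.le, div_div_div_cancel_right₀ (by positivity)]

end StructureFunction

lemma tendsto_sq_nhdsGT_zero : Tendsto (fun ρ : ℝ => ρ ^ 2) (𝓝[>] 0) (𝓝[>] 0) :=
  tendsto_nhdsWithin_of_tendsto_nhds_of_eventually_within _
    (by simpa using ((continuous_pow 2).tendsto (0 : ℝ)).mono_left nhdsWithin_le_nhds)
    (by filter_upwards [self_mem_nhdsWithin] with ρ (hρ : 0 < ρ) using pow_pos hρ 2)

/-- With `β(y) = (D'(y) − D'(0))/√(D(y) − D'(y)²y/D'(0))`, if `D(0)=0`, `D` is C⁴ near 0,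
`D'(0) > 0` and `D''(0) < 0`, then `lim_{ρ→0⁺} β(ρ²)² = −(2/3) D''(0)`. -/
theorem stmt6 (D : ℝ → ℝ) (hD0 : D 0 = 0)
    (hsmooth : ContDiffAt ℝ 4 D 0)
    (hD'0 : 0 < deriv D 0)
    (hD''0 : iteratedDeriv 2 D 0 < 0) :
    Filter.Tendsto
      (fun ρ : ℝ =>
        ((deriv D (ρ ^ 2) - deriv D 0) /
            Real.sqrt (D (ρ ^ 2) - (deriv D (ρ ^ 2)) ^ 2 * ρ ^ 2 / deriv D 0)) ^ 2)
      (nhdsWithin 0 (Set.Ioi 0))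
      (nhds (-(2 / 3) * iteratedDeriv 2 D 0)) := by
  have hD : ∀ᶠ y in 𝓝 0, DifferentiableAt ℝ D y :=
    (hsmooth.eventually (by simp)).mono fun y hy => hy.differentiableAt (by norm_num)
  have hD' : HasDerivAt (deriv D) (iteratedDeriv 2 D 0) 0 := by
    rw [iteratedDeriv_eq_iterate]
    exact ((hsmooth.derivWithin (m := 1) (by norm_num)).differentiableAt (by norm_num)).hasDerivAt
  exact (tendsto_beta_sq_nhdsGT_zero hD0 hD'0.ne' hD''0 hD hD').comp tendsto_sq_nhdsGT_zero
end

section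
/- Suppose D is smooth on (0,∞) with D'>0, D''<0, D'''>0, D(0)=0, and suppose β(y)² ≤ −(2/3)D''(0) for all y>0, where β(y) = (D'(y)−D'(0))/√(D(y) − D'(y)²y/D'(0)). Then for all y>0, setting α(y) = 2D''(y)/√(D(y) − D'(y)²y/D'(0)): (α(y)y + β(y))β(y) < −2D''(0) and (α(y)y + β(y))α(y)y < −4D''(0). -/
open Real

theorem stmt8_aux (S c0 X Z y : ℝ) (hS : 0 < S) (hZneg : Z < 0) (hXy : X * y < 0)
    (hkey : Z < X * y) (hZ2 : (Z / S) ^ 2 ≤ -(2 / 3) * c0) :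
    (2 * X / S * y + Z / S) * (Z / S) < -2 * c0 ∧
    (2 * X / S * y + Z / S) * (2 * X / S * y) < -4 * c0 := by
  have hSne : S ≠ 0 := ne_of_gt hS
  have hS2 : 0 < S ^ 2 := pow_pos hS 2
  have hZ2' : Z ^ 2 ≤ -(2 / 3) * c0 * S ^ 2 := by
    rw [div_pow, div_le_iff₀ hS2] at hZ2
    linarith
  have e1 : (2 * X / S * y + Z / S) * (Z / S) = (2 * X * y + Z) * Z / S ^ 2 := by
    field_simp
  have e2 : (2 * X / S * y + Z / S) * (2 * X / S * y)
      = (2 * X * y + Z) * (2 * X * y) / S ^ 2 := by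
    field_simp
  constructor
  · rw [e1, div_lt_iff₀ hS2]
    nlinarith [hZ2', mul_neg_of_pos_of_neg (by linarith : (0:ℝ) < 2 * X * y - 2 * Z) hZneg]
  · rw [e2, div_lt_iff₀ hS2]
    nlinarith [hZ2', mul_neg_of_neg_of_pos (by linarith : 2 * X * y + 3 * Z < 0)
      (by linarith : (0:ℝ) < 2 * X * y - 2 * Z)]

/-- If `D` is smooth on `(0,∞)` with `D' > 0`, `D'' < 0`, `D''' > 0`, `D(0)=0`, `D'(0) > 0`,
`D''(0) < 0`, the quantity `D(y) − D'(y)²y/D'(0)` is positive for `y > 0`, and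
`β(y)² ≤ −(2/3)D''(0)` for all `y > 0` where
`β(y) = (D'(y)−D'(0))/√(D(y) − D'(y)²y/D'(0))`, then for all `y > 0`, with
`α(y) = 2D''(y)/√(D(y) − D'(y)²y/D'(0))`:
`(α(y)y + β(y))β(y) < −2D''(0)` and `(α(y)y + β(y))α(y)y < −4D''(0)`. -/
theorem stmt8 (D : ℝ → ℝ) (hD0 : D 0 = 0)
    (hsmooth : ContDiffOn ℝ (⊤ : ℕ∞) D (Set.Ioi (0:ℝ)))
    (hD' : ∀ y : ℝ, 0 < y → 0 < deriv D y)
    (hD'' : ∀ y : ℝ, 0 < y → iteratedDeriv 2 D y < 0)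
    (hD''' : ∀ y : ℝ, 0 < y → 0 < iteratedDeriv 3 D y)
    (hD'0 : 0 < deriv D 0)
    (hD''0 : iteratedDeriv 2 D 0 < 0)
    (hpos : ∀ y : ℝ, 0 < y → 0 < D y - (deriv D y) ^ 2 * y / deriv D 0)
    (hβ : ∀ y : ℝ, 0 < y →
      ((deriv D y - deriv D 0) / Real.sqrt (D y - (deriv D y) ^ 2 * y / deriv D 0)) ^ 2
        ≤ -(2 / 3) * iteratedDeriv 2 D 0) :
    ∀ y : ℝ, 0 < y →
      ((2 * iteratedDeriv 2 D y / Real.sqrt (D y - (deriv D y) ^ 2 * y / deriv D 0)) * y +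
            (deriv D y - deriv D 0) / Real.sqrt (D y - (deriv D y) ^ 2 * y / deriv D 0)) *
          ((deriv D y - deriv D 0) / Real.sqrt (D y - (deriv D y) ^ 2 * y / deriv D 0))
        < -2 * iteratedDeriv 2 D 0 ∧
      ((2 * iteratedDeriv 2 D y / Real.sqrt (D y - (deriv D y) ^ 2 * y / deriv D 0)) * y +
            (deriv D y - deriv D 0) / Real.sqrt (D y - (deriv D y) ^ 2 * y / deriv D 0)) *
          ((2 * iteratedDeriv 2 D y / Real.sqrt (D y - (deriv D y) ^ 2 * y / deriv D 0)) * y)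
        < -4 * iteratedDeriv 2 D 0 := by
  intro y hy
  have heq2 : iteratedDeriv 2 D = deriv (deriv D) := by
    rw [iteratedDeriv_succ, iteratedDeriv_one]
  have heq3 : iteratedDeriv 3 D = deriv (deriv (deriv D)) := by
    rw [iteratedDeriv_succ, heq2]
  have hdiff2 : DifferentiableAt ℝ (deriv D) 0 := by
    by_contra h
    rw [heq2, deriv_zero_of_not_differentiableAt h] at hD''0
    exact lt_irrefl 0 hD''0
  have hf1 : ContDiffOn ℝ (⊤ : ℕ∞) (deriv D) (Set.Ioi 0) :=
    hsmooth.deriv_of_isOpen isOpen_Ioi (by simp)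
  have hf2 : ContDiffOn ℝ (⊤ : ℕ∞) (deriv (deriv D)) (Set.Ioi 0) :=
    hf1.deriv_of_isOpen isOpen_Ioi (by simp)
  have hcont1 : ContinuousOn (deriv D) (Set.Icc 0 y) := by
    intro t ht
    rcases eq_or_lt_of_le ht.1 with h0 | h0
    · rw [← h0]
      exact hdiff2.continuousAt.continuousWithinAt
    · exact (hf1.continuousOn.continuousAt (isOpen_Ioi.mem_nhds h0)).continuousWithinAt
  have hanti : StrictAntiOn (deriv D) (Set.Icc 0 y) := by
    apply strictAntiOn_of_deriv_neg (convex_Icc 0 y) hcont1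
    intro t ht
    rw [interior_Icc] at ht
    have h := hD'' t ht.1
    rwa [heq2] at h
  have hb : deriv D y < deriv D 0 :=
    hanti (Set.left_mem_Icc.mpr hy.le) (Set.right_mem_Icc.mpr hy.le) hy
  have hdiffOn : DifferentiableOn ℝ (deriv D) (Set.Ioo 0 y) :=
    (hf1.differentiableOn (by simp)).mono Set.Ioo_subset_Ioi_self
  obtain ⟨c, hc, hceq⟩ := exists_deriv_eq_slope (deriv D) hy hcont1 hdiffOn
  have hmono : StrictMonoOn (deriv (deriv D)) (Set.Icc c y) := by
    apply strictMonoOn_of_deriv_pos (convex_Icc c y)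
    · exact hf2.continuousOn.mono (fun t ht => lt_of_lt_of_le hc.1 ht.1)
    · intro t ht
      rw [interior_Icc] at ht
      have h := hD''' t (hc.1.trans ht.1)
      rwa [heq3] at h
  have hcy : deriv (deriv D) c < deriv (deriv D) y :=
    hmono (Set.left_mem_Icc.mpr hc.2.le) (Set.right_mem_Icc.mpr hc.2.le) hc.2
  have key : deriv D y - deriv D 0 < iteratedDeriv 2 D y * y := by
    rw [heq2]
    have heqc : deriv (deriv D) c * y = deriv D y - deriv D 0 := by
      rw [hceq, sub_zero]; field_simp [hy.ne']
    nlinarith [mul_lt_mul_of_pos_right hcy hy]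
  have hβy := hβ y hy
  have hXneg : iteratedDeriv 2 D y < 0 := hD'' y hy
  exact stmt8_aux _ _ _ _ _ (Real.sqrt_pos.mpr (hpos y hy)) (sub_neg.mpr hb)
    (mul_neg_of_neg_of_pos hXneg hy) key (by linarith [hβy])
end

section
/- Fix a > 0, c > 0, b, d ∈ ℝ, μ ≠ 0, D'(0) > 0, and suppose aN + b < cN + d. Then there exist constants C > 0 and N₀ such that for all N > N₀, ∫₀^∞ ∫_{−∞}^∞ (1 + |s|^{aN+b}) exp(−N(s² + μ²)ρ²/(2D'(0))) ρ^{cN+d} ds dρ ≤ C^N. -/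
/-!
Both integrals are explicit. At fixed `ρ` the `s`-integral is a Gaussian moment in the variable
`sρ`, and `∫₀^∞ t^m e^{-βt²} dt = β^{-(m+1)/2} Γ((m+1)/2) / 2`; so with `b = N / (2 D'(0))`,
`∫₀^∞ ∫ |s|^p e^{-b(s²+μ²)ρ²} ρ^q ds dρ` equals
`b^{-(p+1)/2} Γ((p+1)/2) · (bμ²)^{-(q-p)/2} Γ((q-p)/2) / 2`,
which is used for `p = 0` and for `p = aN + b`. Log-convexity of `Γ` gives `Γ(x) ≤ (x+1)^x / x`,
hence `β^{-x} Γ(x) ≤ ((x+1)/β)^x / x`. Every `x` here grows at most linearly in `N` while `β` is a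
constant multiple of `N`, so `(x+1)/β` stays bounded; and every `x` stays away from `0`, because
`q - p = (c-a)N + (d-b)` is eventually positive, hence eventually bounded below.
-/

open Real MeasureTheory Filter Set

theorem Real.Gamma_add_one_le_rpow {x : ℝ} (hx : 0 < x) : Gamma (x + 1) ≤ (x + 1) ^ x := by
  set n := ⌈x⌉₊
  have hn : n ≠ 0 := (Nat.ceil_pos.2 hx).ne'
  have hn0 : (0 : ℝ) < n := by positivity
  have hnx : (n : ℝ) < x + 1 := Nat.ceil_lt_add_one hx.le
  -- log-convexity of `Γ` on `[n, n + 1]`: `Γ(n + y) ≤ Γ(n) n^y` for `0 < y ≤ 1`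
  have hconv := BohrMollerup.f_add_nat_le convexOn_log_Gamma
    (fun {y} hy => by
      rw [Function.comp_apply, Gamma_add_one hy.ne', log_mul hy.ne' (Gamma_pos_of_pos hy).ne',
        add_comm, Function.comp_apply])
    hn (x := x + 1 - n) (by linarith) (by linarith [Nat.le_ceil x])
  rw [Function.comp_apply, Function.comp_apply, add_sub_cancel, ← log_rpow hn0,
    ← log_mul (Gamma_pos_of_pos hn0).ne' (by positivity),
    log_le_log_iff (Gamma_pos_of_pos (by linarith)) (by positivity)] at hconv
  have hfact : Gamma n ≤ (n : ℝ) ^ ((n : ℝ) - 1) := by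
    obtain ⟨m, hm⟩ := Nat.exists_eq_succ_of_ne_zero hn
    rw [hm, Nat.cast_succ, Gamma_nat_eq_factorial, add_sub_cancel_right, rpow_natCast]
    exact_mod_cast (Nat.factorial_le_pow m).trans (Nat.pow_le_pow_left m.le_succ m)
  calc Gamma (x + 1) ≤ Gamma n * (n : ℝ) ^ (x + 1 - n) := hconv
    _ ≤ (n : ℝ) ^ ((n : ℝ) - 1) * (n : ℝ) ^ (x + 1 - n) := by gcongr
    _ = (n : ℝ) ^ x := by rw [← rpow_add hn0]; ring_nf
    _ ≤ (x + 1) ^ x := by gcongr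

theorem Real.rpow_neg_mul_Gamma_le {x β : ℝ} (hx : 0 < x) (hβ : 0 < β) :
    β ^ (-x) * Gamma x ≤ ((x + 1) / β) ^ x / x := by
  have hΓ : Gamma x = Gamma (x + 1) / x := by rw [Gamma_add_one hx.ne']; field_simp
  calc β ^ (-x) * Gamma x ≤ β ^ (-x) * ((x + 1) ^ x / x) := by
        rw [hΓ]; gcongr; exact Gamma_add_one_le_rpow hx
    _ = ((x + 1) / β) ^ x / x := by
        rw [div_rpow (by positivity) hβ.le, rpow_neg hβ.le]; ring

def ExpBounded (f : ℕ → ℝ) : Prop :=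
  ∃ C, 0 < C ∧ ∀ᶠ N in atTop, |f N| ≤ C ^ N

theorem expBounded_const (c : ℝ) : ExpBounded fun _ => c :=
  ⟨max 1 |c|, by positivity, (eventually_ne_atTop 0).mono fun N hN =>
    (le_max_right 1 |c|).trans (le_self_pow₀ (le_max_left 1 |c|) hN)⟩

theorem expBounded_pow (r : ℝ) : ExpBounded fun N => r ^ N :=
  ⟨max |r| 1, by positivity, Eventually.of_forall fun N => by
    rw [abs_pow]; exact pow_le_pow_left₀ (abs_nonneg r) (le_max_left _ _) N⟩

namespace ExpBounded

variable {f g : ℕ → ℝ}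

theorem mono (hg : ExpBounded g) (h : ∀ᶠ N in atTop, |f N| ≤ |g N|) : ExpBounded f := by
  obtain ⟨C, hC, hgC⟩ := hg
  exact ⟨C, hC, (h.and hgC).mono fun N hN => hN.1.trans hN.2⟩

theorem add (hf : ExpBounded f) (hg : ExpBounded g) : ExpBounded (f + g) := by
  obtain ⟨C, hC, hfC⟩ := hf
  obtain ⟨D, hD, hgD⟩ := hg
  refine ⟨C + D, by positivity, (hfC.and (hgD.and (eventually_ne_atTop 0))).mono ?_⟩
  rintro N ⟨hfN, hgN, hN⟩
  calc |f N + g N| ≤ |f N| + |g N| := abs_add_le _ _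
    _ ≤ C ^ N + D ^ N := add_le_add hfN hgN
    _ ≤ (C + D) ^ N := pow_add_pow_le hC.le hD.le hN

theorem mul (hf : ExpBounded f) (hg : ExpBounded g) : ExpBounded (f * g) := by
  obtain ⟨C, hC, hfC⟩ := hf
  obtain ⟨D, hD, hgD⟩ := hg
  refine ⟨C * D, by positivity, (hfC.and hgD).mono fun N hN => ?_⟩
  rw [Pi.mul_apply, abs_mul, mul_pow]
  exact mul_le_mul hN.1 hN.2 (abs_nonneg _) (pow_nonneg hC.le N)

theorem exists_forall_lt_le_pow (hf : ExpBounded f) :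
    ∃ C : ℝ, 0 < C ∧ ∃ N₀ : ℕ, ∀ N : ℕ, N₀ < N → f N ≤ C ^ N := by
  obtain ⟨C, hC, hfC⟩ := hf
  obtain ⟨N₀, hN₀⟩ := eventually_atTop.1 hfC
  exact ⟨C, hC, N₀, fun N hN => (le_abs_self _).trans (hN₀ N hN.le)⟩

end ExpBounded

theorem expBounded_rpow_neg_mul_Gamma {x β : ℕ → ℝ} {x₀ A κ : ℝ} (hx₀ : 0 < x₀) (hκ : 0 < κ)
    (h : ∀ᶠ N in atTop, x₀ ≤ x N ∧ x N + 1 ≤ A * N ∧ κ * N ≤ β N) :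
    ExpBounded fun N => β N ^ (-x N) * Gamma (x N) := by
  set K := max 1 (A / κ)
  refine ((expBounded_const x₀⁻¹).mul (expBounded_pow (K ^ A))).mono ?_
  filter_upwards [h, eventually_gt_atTop 0] with N ⟨hxN, hxA, hβN⟩ hN
  have hN : (0 : ℝ) < N := by exact_mod_cast hN
  have hxpos : 0 < x N := hx₀.trans_le hxN
  have hβpos : 0 < β N := (by positivity : 0 < κ * N).trans_le hβN
  have hratio : (x N + 1) / β N ≤ K := le_max_of_le_right <| by
    rw [div_le_div_iff₀ hβpos hκ]
    nlinarith
  have hK : 1 ≤ K := le_max_left _ _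
  rw [abs_of_nonneg (by positivity), Pi.mul_apply, abs_of_nonneg (by positivity),
    ← rpow_natCast, ← rpow_mul (by positivity)]
  calc β N ^ (-x N) * Gamma (x N) ≤ ((x N + 1) / β N) ^ x N / x N :=
        rpow_neg_mul_Gamma_le hxpos hβpos
    _ ≤ K ^ x N / x₀ := by gcongr
    _ ≤ K ^ (A * N) / x₀ := by gcongr; linarith
    _ = x₀⁻¹ * K ^ (A * N) := by ring

theorem tendsto_mul_natCast_add_atTop {α : ℝ} (hα : 0 < α) (β : ℝ) :
    Tendsto (fun N : ℕ => α * N + β) atTop atTop :=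
  tendsto_atTop_add_const_right _ β (tendsto_natCast_atTop_atTop.const_mul_atTop hα)

theorem exists_pos_eventually_le_mul_natCast_add {α β : ℝ}
    (h : ∀ᶠ N : ℕ in atTop, 0 < α * N + β) :
    ∃ δ, 0 < δ ∧ ∀ᶠ N : ℕ in atTop, δ ≤ α * N + β := by
  have hα : 0 ≤ α := by
    by_contra! hα
    have hbot : Tendsto (fun N : ℕ => α * N + β) atTop atBot :=
      tendsto_atBot_add_const_right _ β (tendsto_natCast_atTop_atTop.const_mul_atTop_of_neg hα)
    obtain ⟨N, hpos, hneg⟩ := (h.and (hbot.eventually_lt_atBot 0)).exists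
    linarith
  obtain ⟨N₁, hN₁⟩ := eventually_atTop.1 h
  refine ⟨α * N₁ + β, hN₁ N₁ le_rfl, eventually_atTop.2 ⟨N₁, fun N hN => ?_⟩⟩
  have : (N₁ : ℝ) ≤ N := by exact_mod_cast hN
  nlinarith

theorem integral_abs_rpow_mul_exp_neg_mul_sq {b p : ℝ} (hb : 0 < b) (hp : -1 < p) :
    ∫ s : ℝ, |s| ^ p * exp (-b * s ^ 2) = b ^ (-((p + 1) / 2)) * Gamma ((p + 1) / 2) := by
  have h := integral_comp_abs (f := fun s => s ^ p * exp (-b * s ^ (2 : ℝ)))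
  have hI := integral_rpow_mul_exp_neg_mul_rpow two_pos hp hb
  simp only [rpow_two, sq_abs] at h hI
  rw [h, hI]
  ring_nf

noncomputable def gaussianMoment (b μ p q : ℝ) : ℝ :=
  ∫ ρ in Ioi 0, ∫ s : ℝ, |s| ^ p * exp (-(b * (s ^ 2 + μ ^ 2) * ρ ^ 2)) * ρ ^ q

theorem integral_abs_rpow_mul_exp_mul_rpow {b μ p q ρ : ℝ} (hb : 0 < b) (hp : -1 < p)
    (hρ : 0 < ρ) :
    ∫ s : ℝ, |s| ^ p * exp (-(b * (s ^ 2 + μ ^ 2) * ρ ^ 2)) * ρ ^ q =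
      b ^ (-((p + 1) / 2)) * Gamma ((p + 1) / 2) *
        (ρ ^ (q - p - 1) * exp (-(b * μ ^ 2) * ρ ^ 2)) := by
  have hsplit : ∀ s : ℝ, |s| ^ p * exp (-(b * (s ^ 2 + μ ^ 2) * ρ ^ 2)) * ρ ^ q =
      |s| ^ p * exp (-(b * ρ ^ 2) * s ^ 2) * (ρ ^ q * exp (-(b * μ ^ 2) * ρ ^ 2)) := fun s => by
    rw [show -(b * (s ^ 2 + μ ^ 2) * ρ ^ 2) = -(b * ρ ^ 2) * s ^ 2 + -(b * μ ^ 2) * ρ ^ 2 by ring,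
      exp_add]
    ring
  simp_rw [hsplit]
  rw [integral_mul_const, integral_abs_rpow_mul_exp_neg_mul_sq (by positivity) hp,
    mul_rpow hb.le (by positivity), ← rpow_natCast, ← rpow_mul hρ.le]
  have hρpow : ρ ^ ((2 : ℕ) * -((p + 1) / 2)) * ρ ^ q = ρ ^ (q - p - 1) := by
    rw [← rpow_add hρ]; push_cast; ring_nf
  rw [← hρpow]; ring

-- Integrable because the integral is nonzero: non-integrable functions have integral `0`.
theorem integrable_abs_rpow_mul_exp_mul_rpow {b μ p q ρ : ℝ} (hb : 0 < b) (hp : -1 < p)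
    (hρ : 0 < ρ) :
    Integrable fun s : ℝ => |s| ^ p * exp (-(b * (s ^ 2 + μ ^ 2) * ρ ^ 2)) * ρ ^ q :=
  .of_integral_ne_zero <| by
    rw [integral_abs_rpow_mul_exp_mul_rpow hb hp hρ]
    have : 0 < (p + 1) / 2 := by linarith
    positivity

theorem gaussianMoment_eq {b μ p q : ℝ} (hb : 0 < b) (hμ : μ ≠ 0) (hp : -1 < p) (hpq : p < q) :
    gaussianMoment b μ p q =
      b ^ (-((p + 1) / 2)) * Gamma ((p + 1) / 2) *
        ((b * μ ^ 2) ^ (-((q - p) / 2)) * Gamma ((q - p) / 2)) / 2 := by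
  rw [gaussianMoment, setIntegral_congr_fun measurableSet_Ioi fun ρ hρ =>
    integral_abs_rpow_mul_exp_mul_rpow hb hp hρ, integral_const_mul]
  have hI := integral_rpow_mul_exp_neg_mul_rpow two_pos (by linarith : -1 < q - p - 1)
    (by positivity : 0 < b * μ ^ 2)
  simp only [rpow_two, sub_add_cancel] at hI
  rw [hI, neg_div]
  ring

theorem integrableOn_integral_abs_rpow_mul_exp_mul_rpow {b μ p q : ℝ} (hb : 0 < b)
    (hμ : μ ≠ 0) (hp : -1 < p) (hpq : p < q) :
    IntegrableOn
      (fun ρ => ∫ s : ℝ, |s| ^ p * exp (-(b * (s ^ 2 + μ ^ 2) * ρ ^ 2)) * ρ ^ q) (Ioi 0) :=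
  .of_integral_ne_zero <| by
    rw [← gaussianMoment, gaussianMoment_eq hb hμ hp hpq]
    have : 0 < (p + 1) / 2 := by linarith
    have : 0 < (q - p) / 2 := by linarith
    positivity

theorem setIntegral_integral_one_add_abs_rpow_mul_exp_mul_rpow {b μ p q : ℝ} (hb : 0 < b)
    (hμ : μ ≠ 0) (hp : -1 < p) (hq : 0 < q) (hpq : p < q) :
    ∫ ρ in Ioi 0, ∫ s : ℝ, (1 + |s| ^ p) * exp (-(b * (s ^ 2 + μ ^ 2) * ρ ^ 2)) * ρ ^ q =
      gaussianMoment b μ 0 q + gaussianMoment b μ p q := by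
  rw [gaussianMoment, gaussianMoment,
    ← integral_add (integrableOn_integral_abs_rpow_mul_exp_mul_rpow hb hμ (by norm_num) hq)
      (integrableOn_integral_abs_rpow_mul_exp_mul_rpow hb hμ hp hpq)]
  refine setIntegral_congr_fun measurableSet_Ioi fun ρ hρ => ?_
  rw [← integral_add (integrable_abs_rpow_mul_exp_mul_rpow hb (by norm_num) hρ)
    (integrable_abs_rpow_mul_exp_mul_rpow hb hp hρ)]
  simp only [rpow_zero]
  congr 1 with s
  ring

theorem expBounded_gaussianMoment {p q : ℕ → ℝ} {κ μ δ A : ℝ} (hκ : 0 < κ) (hμ : μ ≠ 0)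
    (hδ : 0 < δ) (h : ∀ᶠ N in atTop, 0 ≤ p N ∧ δ ≤ q N - p N ∧ q N ≤ A * N) :
    ExpBounded fun N => gaussianMoment (κ * N) μ (p N) (q N) := by
  have hev : ∀ᶠ N : ℕ in atTop, 0 ≤ p N ∧ δ ≤ q N - p N ∧ q N ≤ A * N ∧ (1 : ℝ) ≤ N := by
    filter_upwards [h, eventually_ge_atTop 1] with N hN hN1
    exact ⟨hN.1, hN.2.1, hN.2.2, by exact_mod_cast hN1⟩
  have hs : ExpBounded fun N => (κ * N) ^ (-((p N + 1) / 2)) * Gamma ((p N + 1) / 2) :=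
    expBounded_rpow_neg_mul_Gamma (A := (A + 3) / 2) one_half_pos hκ <|
      hev.mono fun N ⟨hp, hpq, hqA, hN⟩ => ⟨by linarith, by linarith, le_rfl⟩
  have hρ : ExpBounded fun N =>
      (κ * N * μ ^ 2) ^ (-((q N - p N) / 2)) * Gamma ((q N - p N) / 2) :=
    expBounded_rpow_neg_mul_Gamma (A := (A + 2) / 2) (κ := κ * μ ^ 2) (half_pos hδ)
      (by positivity) <|
      hev.mono fun N ⟨hp, hpq, hqA, hN⟩ => ⟨by linarith, by linarith, le_of_eq (by ring)⟩
  refine ((hs.mul hρ).mul (expBounded_const 2⁻¹)).mono <|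
    hev.mono fun N ⟨hp, hpq, hqA, hN⟩ => le_of_eq ?_
  rw [gaussianMoment_eq (by positivity) hμ (by linarith) (by linarith)]
  simp only [Pi.mul_apply, div_eq_mul_inv]

/-- Fix `a > 0`, `c > 0`, `b, d ∈ ℝ`, `μ ≠ 0`, `D'(0) > 0` (a constant `D'0`), and suppose
`aN + b < cN + d` (for all large `N`). Then there exist `C > 0` and `N₀` such that for all
`N > N₀`,
`∫₀^∞ ∫_ℝ (1 + |s|^{aN+b}) exp(−N(s² + μ²)ρ²/(2D'0)) ρ^{cN+d} ds dρ ≤ C^N`. -/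
theorem stmt15 (a b c d μ D'0 : ℝ) (ha : 0 < a) (hc : 0 < c) (hμ : μ ≠ 0) (hD : 0 < D'0)
    (habcd : ∀ᶠ N : ℕ in Filter.atTop, a * N + b < c * N + d) :
    ∃ C : ℝ, 0 < C ∧ ∃ N₀ : ℕ, ∀ N : ℕ, N₀ < N →
      (∫ ρ in Set.Ioi (0:ℝ), ∫ s : ℝ,
          (1 + |s| ^ (a * N + b)) *
            Real.exp (-(N * (s ^ 2 + μ ^ 2) * ρ ^ 2) / (2 * D'0)) *
            ρ ^ (c * N + d))
        ≤ C ^ N := by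
  obtain ⟨δ, hδ, hgap⟩ := exists_pos_eventually_le_mul_natCast_add (α := c - a) (β := d - b)
    (habcd.mono fun N hN => by linarith)
  have hev : ∀ᶠ N : ℕ in atTop, 1 ≤ c * N + d ∧ 0 ≤ a * N + b ∧
      δ ≤ c * N + d - (a * N + b) ∧ c * N + d ≤ (c + |d|) * N ∧ (0 : ℝ) < N := by
    filter_upwards [(tendsto_mul_natCast_add_atTop hc d).eventually_ge_atTop 1,
      (tendsto_mul_natCast_add_atTop ha b).eventually_ge_atTop 0, hgap, eventually_ge_atTop 1]
      with N hq hp hpq hN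
    have hN : (1 : ℝ) ≤ N := by exact_mod_cast hN
    exact ⟨hq, hp, by linarith, by nlinarith [le_abs_self d, abs_nonneg d], by linarith⟩
  have hκ : 0 < 1 / (2 * D'0) := by positivity
  have h₀ := expBounded_gaussianMoment (p := fun _ => 0) (q := fun N => c * N + d) hκ hμ one_pos
    (hev.mono fun N ⟨hq, _, _, hqA, _⟩ => ⟨le_rfl, by linarith, hqA⟩)
  have h₁ := expBounded_gaussianMoment (p := fun N => a * N + b) (q := fun N => c * N + d) hκ hμ
    hδ (hev.mono fun N ⟨_, hp, hpq, hqA, _⟩ => ⟨hp, hpq, hqA⟩)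
  refine ((h₀.add h₁).mono <| hev.mono fun N hN => le_of_eq ?_).exists_forall_lt_le_pow
  obtain ⟨hq, hp, hpq, -, hN⟩ := hN
  have harg : ∀ s ρ : ℝ, -(N * (s ^ 2 + μ ^ 2) * ρ ^ 2) / (2 * D'0) =
      -(1 / (2 * D'0) * N * (s ^ 2 + μ ^ 2) * ρ ^ 2) := fun s ρ => by ring
  simp_rw [harg]
  rw [setIntegral_integral_one_add_abs_rpow_mul_exp_mul_rpow (by positivity) hμ (by linarith)
    (by linarith) (by linarith)]
  rfl
end

section
/- Define J₁(x) = (1/2)log 2 − (1/2)x√(x²−2) − log(−x + √(x²−2)) for x ≤ −√2 (and +∞ for x > −√2), and φ(x) = −x²/2 − μx/√(−D''(0)) where μ > √(−2D''(0)) and D''(0)<0. Then the function x ↦ φ(x) − J₁(x) on (−∞, −√2] attains its maximum at x* = −μ/√(−4D''(0)) − √(−D''(0))/μ, which satisfies x* < −√2, and the maximal value is μ²/(−4D''(0)) + log(μ/√(−2D''(0))) + 1/2. -/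
open Real

/-! Substituting `x = -(u/2 + 1/u)` with `u ≥ √2` rationalises `√(x² - 2) = u/2 - 1/u`,
and the objective `φ - J₁` becomes `t (u/2 + 1/u) - u²/4 + log u` up to a constant, where
`t = μ/√(-D''(0)) > √2`. Its derivative in `u` is `(t - u)(1/2 - 1/u²)`, so on `[√2, ∞)` it
increases up to `u = t` and decreases after, and `u = t` corresponds to `x*`. -/

noncomputable def J₁ (x : ℝ) : ℝ :=
  1 / 2 * log 2 - 1 / 2 * x * √(x ^ 2 - 2) - log (-x + √(x ^ 2 - 2))

/-- `σ` stands for `√(-D''(0))`. -/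
noncomputable def φ (μ σ x : ℝ) : ℝ := -x ^ 2 / 2 - μ * x / σ

noncomputable def joukowski (u : ℝ) : ℝ := -(u / 2 + u⁻¹)

noncomputable def joukowskiObjective (t u : ℝ) : ℝ := t * (u / 2 + u⁻¹) - u ^ 2 / 4 + log u

lemma half_sub_inv_nonneg {u : ℝ} (hu : √2 ≤ u) : 0 ≤ u / 2 - u⁻¹ := by
  have hu0 : 0 < u := (sqrt_pos.2 two_pos).trans_le hu
  have h2 : 2 ≤ u ^ 2 := by simpa using pow_le_pow_left₀ (sqrt_nonneg 2) hu 2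
  rw [show u / 2 - u⁻¹ = (u ^ 2 - 2) / (2 * u) by field_simp]
  exact div_nonneg (by linarith) (by positivity)

lemma joukowski_lt_neg_sqrt_two {u : ℝ} (hu : √2 < u) : joukowski u < -√2 := by
  have hu0 : 0 < u := (sqrt_pos.2 two_pos).trans hu
  have hsq : 0 < (u - √2) ^ 2 / (2 * u) := by
    have : 0 < u - √2 := by linarith
    positivity
  have hid : u / 2 + u⁻¹ - √2 = (u - √2) ^ 2 / (2 * u) := by
    field_simp
    ring_nf
    rw [sq_sqrt zero_le_two]
    ring
  rw [joukowski]
  linarith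

lemma sqrt_joukowski_sq_sub_two {u : ℝ} (hu : √2 ≤ u) :
    √(joukowski u ^ 2 - 2) = u / 2 - u⁻¹ := by
  have hu0 : u ≠ 0 := ((sqrt_pos.2 two_pos).trans_le hu).ne'
  rw [← sqrt_sq (half_sub_inv_nonneg hu), joukowski]
  congr 1
  field_simp
  ring

lemma exists_joukowski_eq {x : ℝ} (hx : x ≤ -√2) : ∃ u, √2 ≤ u ∧ joukowski u = x := by
  have hx2 : 2 ≤ x ^ 2 := by simpa using pow_le_pow_left₀ (sqrt_nonneg 2) (le_neg.1 hx) 2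
  set r := √(x ^ 2 - 2)
  have hr : r ^ 2 = x ^ 2 - 2 := sq_sqrt (by linarith)
  have hu : √2 ≤ -x + r := by linarith [sqrt_nonneg (x ^ 2 - 2)]
  have hu0 : -x + r ≠ 0 := ((sqrt_pos.2 two_pos).trans_le hu).ne'
  refine ⟨-x + r, hu, ?_⟩
  -- `(-x + r)(-x - r) = 2`
  rw [joukowski]
  field_simp
  linear_combination -hr

lemma phi_sub_J₁_joukowski (μ σ : ℝ) {u : ℝ} (hu : √2 ≤ u) :
    φ μ σ (joukowski u) - J₁ (joukowski u) =
      joukowskiObjective (μ / σ) u - 1 / 2 - log 2 / 2 := by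
  have hu0 : u ≠ 0 := ((sqrt_pos.2 two_pos).trans_le hu).ne'
  have hsum : -joukowski u + (u / 2 - u⁻¹) = u := by rw [joukowski]; ring
  rw [J₁, sqrt_joukowski_sq_sub_two hu, hsum, φ, joukowskiObjective, joukowski]
  field_simp
  ring

lemma hasDerivAt_joukowskiObjective (t : ℝ) {u : ℝ} (hu : 0 < u) :
    HasDerivAt (joukowskiObjective t) ((t - u) * (1 / 2 - (u ^ 2)⁻¹)) u := by
  have h := ((((hasDerivAt_id' u).div_const 2).add (hasDerivAt_inv hu.ne')).const_mul t).sub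
    ((hasDerivAt_pow 2 u).div_const 4) |>.add (hasDerivAt_log hu.ne')
  refine h.congr_deriv ?_
  field_simp
  ring

lemma joukowskiObjective_le {t u : ℝ} (ht : √2 ≤ t) (hu : √2 ≤ u) :
    joukowskiObjective t u ≤ joukowskiObjective t t := by
  have hpos : ∀ v ∈ Set.Ici (√2), 0 < v := fun v hv => (sqrt_pos.2 two_pos).trans_le hv
  set f' := fun v : ℝ => (t - v) * (1 / 2 - (v ^ 2)⁻¹)
  have hderiv : ∀ v ∈ Set.Ici (√2), HasDerivAt (joukowskiObjective t) (f' v) v :=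
    fun v hv => hasDerivAt_joukowskiObjective t (hpos v hv)
  have hcont : ContinuousOn (joukowskiObjective t) (Set.Ici (√2)) :=
    fun v hv => (hderiv v hv).continuousAt.continuousWithinAt
  have hfactor : ∀ v, √2 < v → 0 ≤ 1 / 2 - (v ^ 2)⁻¹ := by
    intro v hv
    have h2 : 2 ≤ v ^ 2 := by simpa using pow_le_pow_left₀ (sqrt_nonneg 2) hv.le 2
    rw [sub_nonneg, one_div]
    exact inv_anti₀ two_pos h2
  rcases le_total u t with hut | htu
  · refine monotoneOn_of_hasDerivWithinAt_nonneg (f' := f') (convex_Icc (√2) t)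
      (hcont.mono Set.Icc_subset_Ici_self) (fun v hv => ?_) (fun v hv => ?_)
      ⟨hu, hut⟩ ⟨ht, le_rfl⟩ hut
    · rw [interior_Icc] at hv
      exact (hderiv v (Set.mem_Ici.2 hv.1.le)).hasDerivWithinAt
    · rw [interior_Icc] at hv
      exact mul_nonneg (by linarith [hv.2]) (hfactor v hv.1)
  · refine antitoneOn_of_hasDerivWithinAt_nonpos (f' := f') (convex_Ici t)
      (hcont.mono (Set.Ici_subset_Ici.2 ht)) (fun v hv => ?_) (fun v hv => ?_)
      Set.self_mem_Ici htu htu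
    · rw [interior_Ici] at hv
      exact (hderiv v (Set.mem_Ici.2 (ht.trans hv.le))).hasDerivWithinAt
    · rw [interior_Ici] at hv
      exact mul_nonpos_of_nonpos_of_nonneg (by linarith [hv.out]) (hfactor v (ht.trans_lt hv))

/-- With `J₁(x) = (1/2)log 2 − (1/2)x√(x²−2) − log(−x + √(x²−2))` for `x ≤ −√2`,
`φ(x) = −x²/2 − μx/√(−D''(0))`, `D''(0) < 0` and `μ > √(−2D''(0))`, the function
`φ − J₁` on `(−∞, −√2]` attains its maximum at
`x* = −μ/√(−4D''(0)) − √(−D''(0))/μ < −√2`, with maximal value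
`μ²/(−4D''(0)) + log(μ/√(−2D''(0))) + 1/2`. -/
theorem stmt18 (D''0 μ : ℝ) (hD : D''0 < 0) (hμ : Real.sqrt (-2 * D''0) < μ) :
    (-μ / Real.sqrt (-4 * D''0) - Real.sqrt (-D''0) / μ) < -Real.sqrt 2 ∧
    (∀ x : ℝ, x ≤ -Real.sqrt 2 →
      (-x ^ 2 / 2 - μ * x / Real.sqrt (-D''0)) -
          ((1 / 2) * Real.log 2 - (1 / 2) * x * Real.sqrt (x ^ 2 - 2) -
            Real.log (-x + Real.sqrt (x ^ 2 - 2)))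
        ≤ (-((-μ / Real.sqrt (-4 * D''0) - Real.sqrt (-D''0) / μ)) ^ 2 / 2 -
              μ * (-μ / Real.sqrt (-4 * D''0) - Real.sqrt (-D''0) / μ) /
                Real.sqrt (-D''0)) -
          ((1 / 2) * Real.log 2 -
            (1 / 2) * (-μ / Real.sqrt (-4 * D''0) - Real.sqrt (-D''0) / μ) *
              Real.sqrt ((-μ / Real.sqrt (-4 * D''0) - Real.sqrt (-D''0) / μ) ^ 2 - 2) -
            Real.log (-(-μ / Real.sqrt (-4 * D''0) - Real.sqrt (-D''0) / μ) +
              Real.sqrt ((-μ / Real.sqrt (-4 * D''0) - Real.sqrt (-D''0) / μ) ^ 2 - 2)))) ∧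
    (-((-μ / Real.sqrt (-4 * D''0) - Real.sqrt (-D''0) / μ)) ^ 2 / 2 -
          μ * (-μ / Real.sqrt (-4 * D''0) - Real.sqrt (-D''0) / μ) / Real.sqrt (-D''0)) -
        ((1 / 2) * Real.log 2 -
          (1 / 2) * (-μ / Real.sqrt (-4 * D''0) - Real.sqrt (-D''0) / μ) *
            Real.sqrt ((-μ / Real.sqrt (-4 * D''0) - Real.sqrt (-D''0) / μ) ^ 2 - 2) -
          Real.log (-(-μ / Real.sqrt (-4 * D''0) - Real.sqrt (-D''0) / μ) +
            Real.sqrt ((-μ / Real.sqrt (-4 * D''0) - Real.sqrt (-D''0) / μ) ^ 2 - 2)))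
      = μ ^ 2 / (-4 * D''0) + Real.log (μ / Real.sqrt (-2 * D''0)) + 1 / 2 := by
  have hD' : 0 ≤ -D''0 := by linarith
  set σ := √(-D''0)
  have hσ : 0 < σ := sqrt_pos.2 (by linarith)
  have h2σ : √(-2 * D''0) = √2 * σ := by
    rw [← sqrt_mul zero_le_two]; ring_nf
  have h4σ : √(-4 * D''0) = 2 * σ := by
    rw [show -4 * D''0 = 2 ^ 2 * -D''0 by ring, sqrt_mul (by positivity), sqrt_sq zero_le_two]
  have ht : √2 < μ / σ := by rwa [lt_div_iff₀ hσ, ← h2σ]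
  have hμ0 : μ ≠ 0 := (mul_pos (sqrt_pos.2 two_pos) hσ |>.trans (h2σ ▸ hμ)).ne'
  have hxstar : -μ / √(-4 * D''0) - σ / μ = joukowski (μ / σ) := by
    rw [h4σ, joukowski]; field_simp; ring
  rw [hxstar]
  refine ⟨joukowski_lt_neg_sqrt_two ht, fun x hx => ?_, ?_⟩
  · obtain ⟨u, hu, rfl⟩ := exists_joukowski_eq hx
    change φ μ σ (joukowski u) - J₁ (joukowski u) ≤
      φ μ σ (joukowski (μ / σ)) - J₁ (joukowski (μ / σ))
    rw [phi_sub_J₁_joukowski μ σ hu, phi_sub_J₁_joukowski μ σ ht.le]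
    linarith [joukowskiObjective_le ht.le hu]
  · change φ μ σ (joukowski (μ / σ)) - J₁ (joukowski (μ / σ)) = _
    have hσsq : σ ^ 2 = -D''0 := sq_sqrt hD'
    have ht0 : μ / σ ≠ 0 := ((sqrt_pos.2 two_pos).trans ht).ne'
    have hlog : log (μ / (√2 * σ)) = log (μ / σ) - log 2 / 2 := by
      rw [div_mul_eq_div_div_swap, log_div ht0 (sqrt_pos.2 two_pos).ne', log_sqrt zero_le_two]
    rw [phi_sub_J₁_joukowski μ σ ht.le, joukowskiObjective, h2σ, hlog,
      show -4 * D''0 = 4 * σ ^ 2 by rw [hσsq]; ring]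
    field_simp
    ring
end
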